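/- arXiv:0705.1435 — 2 statements merged into one kernel-verified Lean document; each statement's English description precedes it below -/
import Mathlib

section
/- For the 2×2 matrix M = [[-ν₁, ν₂],[ν₁, -ν₂]] with ν₁, ν₂ > 0, for every t ≥ 0 each entry of exp(tM) is at least the corresponding entry of e^{-t(ν₁+ν₂)}·Id, i.e. exp(tM)ᵢⱼ ≥ e^{-t(ν₁+ν₂)} δᵢⱼ. -/
open NormedSpace

/-!
Shifting by `c = t (ν₁ + ν₂)` makes `t • M + c • 1` entrywise nonnegative, and since the shift
commutes with everything, `exp (t • M) = e^{-c} • exp (t • M + c • 1)`. The exponential of an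
entrywise nonnegative matrix dominates the identity entrywise, because every term of its power
series is entrywise nonnegative and the zeroth term is `1`.
-/

namespace Matrix

attribute [local instance] Matrix.linftyOpNormedRing Matrix.linftyOpNormedAlgebra

variable {n : Type*} [Fintype n] [DecidableEq n]

theorem one_apply_le_exp_apply_of_nonneg {A : Matrix n n ℝ} (hA : ∀ i j, 0 ≤ A i j) (i j : n) :
    (1 : Matrix n n ℝ) i j ≤ exp A i j := by
  have hsum : HasSum (fun k : ℕ => ((k.factorial : ℝ)⁻¹ • A ^ k) i j) (exp A i j) :=
    Pi.hasSum.mp (Pi.hasSum.mp (exp_series_hasSum_exp' (𝕂 := ℝ) A) i) j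
  simpa using le_hasSum hsum 0 fun k _ =>
    mul_nonneg (by positivity) (pow_apply_nonneg hA k i j)

theorem exp_add_smul_one (A : Matrix n n ℝ) (c : ℝ) :
    exp (A + c • 1) = Real.exp c • exp A := by
  have hscalar : exp (c • 1 : Matrix n n ℝ) = Real.exp c • 1 := by
    have h := algebraMap_exp_comm (𝔸 := Matrix n n ℝ) c
    rw [Algebra.algebraMap_eq_smul_one, Algebra.algebraMap_eq_smul_one, ← Real.exp_eq_exp_ℝ] at h
    exact h.symm
  rw [exp_add_of_commute _ _ ((Commute.one_right A).smul_right c), hscalar, mul_smul_one]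

theorem exp_neg_mul_one_apply_le_exp_apply {A : Matrix n n ℝ} {c : ℝ}
    (hA : ∀ i j, 0 ≤ (A + c • 1) i j) (i j : n) :
    Real.exp (-c) * (1 : Matrix n n ℝ) i j ≤ exp A i j := by
  have hexp : exp A = Real.exp (-c) • exp (A + c • 1) := by
    rw [← exp_add_smul_one, add_assoc, ← add_smul, add_neg_cancel, zero_smul, add_zero]
  rw [hexp, smul_apply, smul_eq_mul]
  gcongr
  exact one_apply_le_exp_apply_of_nonneg hA i j

end Matrix

theorem exp_tM_entries_ge_diag
    (ν₁ ν₂ : ℝ) (hν₁ : 0 < ν₁) (hν₂ : 0 < ν₂)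
    (M : Matrix (Fin 2) (Fin 2) ℝ)
    (hM : M = !![-ν₁, ν₂; ν₁, -ν₂]) :
    ∀ t : ℝ, 0 ≤ t → ∀ i j : Fin 2,
      Real.exp (-t * (ν₁ + ν₂)) * (1 : Matrix (Fin 2) (Fin 2) ℝ) i j ≤ exp (t • M) i j := by
  intro t ht i j
  have hshift : t • M + (t * (ν₁ + ν₂)) • 1 = !![t * ν₂, t * ν₂; t * ν₁, t * ν₁] := by
    subst hM
    ext k l
    fin_cases k <;> fin_cases l <;> simp <;> ring
  rw [neg_mul]
  refine Matrix.exp_neg_mul_one_apply_le_exp_apply (fun k l => ?_) i j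
  rw [hshift]
  fin_cases k <;> fin_cases l <;> simp only [Matrix.of_apply, Matrix.cons_val_zero,
    Matrix.cons_val_one, Matrix.cons_val_fin_one, Fin.zero_eta, Fin.mk_one] <;>
    positivity
end

section
/- For integers 0 ≤ m ≤ n and real r, ∫_ℝ e^{-v²} H_m(v + iπr/L) H_n(v - iπr/L) dv = √π · m! · 2^n · (-iπr/L)^{n-m} · L_m^{(n-m)}(-2π²r²/L²), where L_m^{(k)} is the generalized Laguerre polynomial. -/
/-!
Taylor expansion gives the addition formula `H_n(x + y) = ∑ₖ C(n,k) H_{n-k}(x) (2y)^k`, which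
reduces the shifted integral to the orthogonality relations `∫ H_i H_j e^{-x²} = δᵢⱼ √π 2^i i!`.
Orthogonality comes from `(H_n e^{-x²})' = -H_{n+1} e^{-x²}`: integrating by parts `n` times gives
`∫ P H_n e^{-x²} = ∫ P^{(n)} e^{-x²}` for every polynomial `P`. For shifts `a` and `b`, only the
terms with `l = k + (n - m)` of the resulting double sum survive, and they assemble into
`√π 2^n m! b^{n-m} L_m^{(n-m)}(-2ab)`; the theorem is the case `b = -a`.
-/

open Real Complex

/-- Physicists' Hermite polynomials (complex argument), via the standard recurrence. -/
noncomputable def hermiteC : ℕ → ℂ → ℂ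
  | 0, _ => 1
  | 1, z => 2 * z
  | (n + 2), z => 2 * z * hermiteC (n + 1) z - 2 * ((n : ℂ) + 1) * hermiteC n z

/-- Generalized Laguerre polynomial L_m^{(k)}. -/
noncomputable def genLaguerre (m k : ℕ) (x : ℝ) : ℝ :=
  ∑ j ∈ Finset.range (m + 1),
    (-1) ^ j * (Nat.choose (m + k) (m - j) : ℝ) * x ^ j / (Nat.factorial j : ℝ)

open Polynomial MeasureTheory

noncomputable def physHermite : ℕ → ℂ[X]
  | 0 => 1
  | 1 => C 2 * X
  | (n + 2) => C 2 * X * physHermite (n + 1) - C (2 * ((n : ℂ) + 1)) * physHermite n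

namespace physHermite

theorem eval_eq_hermiteC (n : ℕ) (z : ℂ) : (physHermite n).eval z = hermiteC n z := by
  induction n using Nat.twoStepInduction with
  | zero => simp [physHermite, hermiteC]
  | one => simp [physHermite, hermiteC]
  | more n ih₁ ih₂ => simp [physHermite, hermiteC, ih₁, ih₂]

theorem natDegree_le (n : ℕ) : (physHermite n).natDegree ≤ n := by
  induction n using Nat.twoStepInduction with
  | zero => simp [physHermite]
  | one => exact (natDegree_C_mul_le (2 : ℂ) X).trans natDegree_X_le
  | more n ih₁ ih₂ =>
    have hX : (C (2 : ℂ) * X).natDegree ≤ 1 := (natDegree_C_mul_le _ _).trans natDegree_X_le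
    rw [physHermite]
    refine (natDegree_sub_le _ _).trans (max_le ?_ ?_)
    · exact (natDegree_mul_le_of_le hX ih₂).trans (by omega)
    · exact (natDegree_C_mul_le _ _).trans (ih₁.trans (by omega))

theorem derivative_succ (n : ℕ) :
    derivative (physHermite (n + 1)) = C (2 * ((n : ℂ) + 1)) * physHermite n := by
  induction n using Nat.twoStepInduction with
  | zero => simp [physHermite]
  | one => simp [physHermite]; ring
  | more n ih₁ ih₂ =>
    rw [physHermite, derivative_sub, derivative_mul, derivative_C_mul_X, ih₂, derivative_C_mul,
      ih₁, physHermite]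
    simp only [map_mul, map_add, map_one, map_natCast, map_ofNat]
    push_cast
    ring

theorem succ_eq (n : ℕ) :
    physHermite (n + 1) = C 2 * X * physHermite n - derivative (physHermite n) := by
  cases n with
  | zero => simp [physHermite]
  | succ n => rw [derivative_succ]; rfl

theorem iterate_derivative {k n : ℕ} (h : k ≤ n) :
    derivative^[k] (physHermite n) = C (2 ^ k * n.descFactorial k : ℂ) * physHermite (n - k) := by
  obtain ⟨n, rfl⟩ := Nat.exists_eq_add_of_le' h
  clear h
  induction k with
  | zero => simp
  | succ k ih =>
    rw [Nat.add_sub_cancel] at ih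
    rw [Function.iterate_succ_apply, ← add_assoc, derivative_succ, iterate_derivative_C_mul, ih,
      ← mul_assoc, ← C_mul, Nat.succ_descFactorial_succ, Nat.add_sub_add_right, Nat.add_sub_cancel]
    push_cast
    ring_nf

theorem hasseDeriv_eq {k n : ℕ} (h : k ≤ n) :
    hasseDeriv k (physHermite n) = C (2 ^ k * n.choose k : ℂ) * physHermite (n - k) := by
  have hfac : (k.factorial : ℂ) ≠ 0 := by exact_mod_cast k.factorial_ne_zero
  apply smul_right_injective ℂ[X] hfac
  have := congrFun (factorial_smul_hasseDeriv (R := ℂ) (k := k)) (physHermite n)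
  simp only [LinearMap.smul_apply, Nat.cast_smul_eq_nsmul] at this ⊢
  rw [this, iterate_derivative h, Nat.descFactorial_eq_factorial_mul_choose, nsmul_eq_mul,
    ← C_eq_natCast, ← mul_assoc, ← C_mul]
  push_cast
  ring_nf

end physHermite

theorem hermiteC_add (n : ℕ) (x y : ℂ) :
    hermiteC n (x + y) =
      ∑ k ∈ Finset.range (n + 1), (n.choose k : ℂ) * hermiteC (n - k) x * (2 * y) ^ k := by
  have hdeg : (taylor x (physHermite n)).natDegree < n + 1 := by
    rw [natDegree_taylor]
    exact Nat.lt_succ_of_le (physHermite.natDegree_le n)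
  rw [← physHermite.eval_eq_hermiteC, add_comm, ← taylor_eval, eval_eq_sum_range' hdeg]
  refine Finset.sum_congr rfl fun k hk => ?_
  rw [taylor_coeff, physHermite.hasseDeriv_eq (Nat.lt_succ_iff.mp (Finset.mem_range.mp hk)),
    eval_mul, eval_C, physHermite.eval_eq_hermiteC]
  ring

theorem integrable_eval_mul_gaussian (P : ℂ[X]) :
    Integrable (fun v : ℝ => P.eval (v : ℂ) * cexp (-(v : ℂ) ^ 2)) := by
  simp_rw [eval_eq_sum_range, Finset.sum_mul]
  refine integrable_finsetSum _ fun i _ => ?_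
  have hmoment := integrable_rpow_mul_exp_neg_mul_sq one_pos (s := i)
    (by linarith [(i.cast_nonneg : (0 : ℝ) ≤ i)])
  refine (hmoment.ofReal.const_mul (P.coeff i)).congr (ae_of_all _ fun v => ?_)
  simp [Real.rpow_natCast, mul_assoc]

theorem hasDerivAt_physHermite_mul_gaussian (n : ℕ) (x : ℝ) :
    HasDerivAt (fun v : ℝ => (physHermite n).eval (v : ℂ) * cexp (-(v : ℂ) ^ 2))
      (-((physHermite (n + 1)).eval (x : ℂ) * cexp (-(x : ℂ) ^ 2))) x := by
  have hP := ((physHermite n).hasDerivAt (x : ℂ)).comp_ofReal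
  have hg := ((hasDerivAt_pow 2 (x : ℂ)).neg.cexp).comp_ofReal
  refine (hP.mul hg).congr_deriv ?_
  rw [physHermite.succ_eq]
  simp only [eval_sub, eval_mul, eval_C, eval_X, Pi.neg_apply]
  norm_num
  ring

theorem integral_eval_mul_physHermite_mul_gaussian (P : ℂ[X]) (n : ℕ) :
    ∫ v : ℝ, (P * physHermite n).eval (v : ℂ) * cexp (-(v : ℂ) ^ 2) =
      ∫ v : ℝ, (derivative^[n] P).eval (v : ℂ) * cexp (-(v : ℂ) ^ 2) := by
  induction n generalizing P with
  | zero => simp [physHermite]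
  | succ n ih =>
    have hparts := integral_mul_deriv_eq_deriv_mul_of_integrable
      (u := fun v : ℝ => P.eval (v : ℂ)) (u' := fun v : ℝ => (derivative P).eval (v : ℂ))
      (v := fun v : ℝ => (physHermite n).eval (v : ℂ) * cexp (-(v : ℂ) ^ 2))
      (v' := fun v : ℝ => -((physHermite (n + 1)).eval (v : ℂ) * cexp (-(v : ℂ) ^ 2)))
      (fun x _ => (P.hasDerivAt (x : ℂ)).comp_ofReal)
      (fun x _ => hasDerivAt_physHermite_mul_gaussian n x)
      (by simpa [Pi.mul_def, mul_assoc] using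
        (integrable_eval_mul_gaussian (P * physHermite (n + 1))).neg)
      (by simpa [Pi.mul_def, mul_assoc] using
        integrable_eval_mul_gaussian (derivative P * physHermite n))
      (by simpa [Pi.mul_def, mul_assoc] using integrable_eval_mul_gaussian (P * physHermite n))
    rw [Function.iterate_succ_apply, ← ih]
    simpa [mul_assoc, integral_neg] using hparts

theorem integral_cexp_neg_sq : ∫ v : ℝ, cexp (-(v : ℂ) ^ 2) = √π := by
  have hreal : (fun v : ℝ => cexp (-(v : ℂ) ^ 2)) = fun v => ((rexp (-v ^ 2) : ℝ) : ℂ) := by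
    ext v
    push_cast
    rfl
  rw [hreal, integral_complex_ofReal]
  simpa using congrArg ofReal (integral_gaussian 1)

theorem integral_physHermite_mul_physHermite_mul_gaussian (i j : ℕ) :
    ∫ v : ℝ, (physHermite i * physHermite j).eval (v : ℂ) * cexp (-(v : ℂ) ^ 2) =
      if i = j then (√π : ℂ) * 2 ^ i * i.factorial else 0 := by
  wlog hij : i ≤ j generalizing i j
  · rw [mul_comm, this j i (by omega), if_neg (by omega), if_neg (by omega)]
  rw [integral_eval_mul_physHermite_mul_gaussian]
  rcases hij.eq_or_lt with rfl | hlt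
  · simp [physHermite.iterate_derivative le_rfl, Nat.descFactorial_self, physHermite,
      integral_const_mul, integral_cexp_neg_sq]
    ring
  · simp [iterate_derivative_eq_zero ((physHermite.natDegree_le i).trans_lt hlt), hlt.ne]

theorem integral_gaussian_mul_hermiteC_add_mul_hermiteC_add (m e : ℕ) (a b : ℂ) :
    ∫ v : ℝ, cexp (-(v : ℂ) ^ 2) * hermiteC m (v + a) * hermiteC (m + e) (v + b) =
      √π * 2 ^ (m + e) * m.factorial * b ^ e *
        ∑ k ∈ Finset.range (m + 1),
          ((m + e).choose (m - k) : ℂ) * (2 * a * b) ^ k / k.factorial := by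
  have hexpand : ∀ v : ℝ,
      cexp (-(v : ℂ) ^ 2) * hermiteC m (v + a) * hermiteC (m + e) (v + b) =
        ∑ k ∈ Finset.range (m + 1), ∑ l ∈ Finset.range (m + e + 1),
          (m.choose k * (2 * a) ^ k * (m + e).choose l * (2 * b) ^ l : ℂ) *
            ((physHermite (m - k) * physHermite (m + e - l)).eval (v : ℂ) *
              cexp (-(v : ℂ) ^ 2)) := by
    intro v
    rw [hermiteC_add, hermiteC_add, mul_assoc, Finset.sum_mul_sum]
    simp_rw [Finset.mul_sum]
    refine Finset.sum_congr rfl fun k _ => Finset.sum_congr rfl fun l _ => ?_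
    rw [eval_mul, physHermite.eval_eq_hermiteC, physHermite.eval_eq_hermiteC]
    ring
  have hintegrable : ∀ P : ℂ[X], ∀ c : ℂ,
      Integrable fun v : ℝ => c * (P.eval (v : ℂ) * cexp (-(v : ℂ) ^ 2)) :=
    fun P c => (integrable_eval_mul_gaussian P).const_mul c
  simp_rw [hexpand]
  rw [integral_finsetSum _ fun k _ => integrable_finsetSum _ fun l _ => hintegrable _ _]
  simp_rw [integral_finsetSum _ fun l _ => hintegrable _ _, integral_const_mul,
    integral_physHermite_mul_physHermite_mul_gaussian, Finset.mul_sum]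
  refine Finset.sum_congr rfl fun k hk => ?_
  have hkm : k ≤ m := Nat.lt_succ_iff.mp (Finset.mem_range.mp hk)
  rw [Finset.sum_eq_single_of_mem (k + e) (Finset.mem_range.mpr (by omega))
    fun l hl hlk => by rw [Finset.mem_range] at hl; rw [if_neg (by omega), mul_zero],
    if_pos (by omega)]
  obtain ⟨q, rfl⟩ := Nat.exists_eq_add_of_le hkm
  rw [Nat.add_sub_cancel_left, Nat.choose_symm_of_eq_add (show k + q + e = (k + e) + q by ring),
    ← Nat.add_choose_mul_factorial_mul_factorial k q, ← Nat.choose_symm_add]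
  have hk : (k.factorial : ℂ) ≠ 0 := by exact_mod_cast k.factorial_ne_zero
  push_cast
  field_simp
  ring

theorem hermite_shifted_product_integral_general (L : ℝ)
    (m n : ℕ) (hmn : m ≤ n) (r : ℝ) :
    (∫ v : ℝ, ((Real.exp (-v ^ 2) : ℝ) : ℂ) *
        hermiteC m ((v : ℂ) + Complex.I * Real.pi * r / L) *
        hermiteC n ((v : ℂ) - Complex.I * Real.pi * r / L)) =
      ((Real.sqrt Real.pi * (Nat.factorial m : ℝ) * 2 ^ n : ℝ) : ℂ) *
        (-Complex.I * Real.pi * r / L) ^ (n - m) *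
        ((genLaguerre m (n - m) (-2 * Real.pi ^ 2 * r ^ 2 / L ^ 2) : ℝ) : ℂ) := by
  obtain ⟨e, rfl⟩ := Nat.exists_eq_add_of_le hmn
  have harg :
      (-2 * (π : ℂ) ^ 2 * r ^ 2 / L ^ 2) = -(2 * (I * π * r / L) * -(I * π * r / L)) := by
    linear_combination (-2 * π ^ 2 * r ^ 2 / L ^ 2 : ℂ) * I_sq
  simp only [genLaguerre, Nat.add_sub_cancel_left]
  push_cast
  simp_rw [sub_eq_add_neg, integral_gaussian_mul_hermiteC_add_mul_hermiteC_add, harg,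
    Finset.mul_sum]
  refine Finset.sum_congr rfl fun k _ => ?_
  rw [mul_right_comm ((-1 : ℂ) ^ k), ← mul_pow, neg_one_mul, neg_neg]
  ring

theorem hermite_shifted_product_integral (L : ℝ) (hL : 0 < L)
    (m n : ℕ) (hmn : m ≤ n) (r : ℝ) :
    (∫ v : ℝ, ((Real.exp (-v ^ 2) : ℝ) : ℂ) *
        hermiteC m ((v : ℂ) + Complex.I * Real.pi * r / L) *
        hermiteC n ((v : ℂ) - Complex.I * Real.pi * r / L)) =
      ((Real.sqrt Real.pi * (Nat.factorial m : ℝ) * 2 ^ n : ℝ) : ℂ) *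
        (-Complex.I * Real.pi * r / L) ^ (n - m) *
        ((genLaguerre m (n - m) (-2 * Real.pi ^ 2 * r ^ 2 / L ^ 2) : ℝ) : ℂ) :=
  hermite_shifted_product_integral_general L m n hmn r
end
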